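/- arXiv:1908.05706 — 2 statements merged into one kernel-verified Lean document; each statement's English description precedes it below -/
import Mathlib

section
/- For every graph G, pw(G) ≤ GMh(G): if G has a grid-major representation of height H, then the pathwidth of G is at most H. -/
open SimpleGraph

/-- The `W × H` grid graph: vertices are the grid points `Fin W × Fin H`, with an
edge between any two grid points at distance exactly one. -/
def gridGraph (W H : ℕ) : SimpleGraph (Fin W × Fin H) where
  Adj p q :=
    (p.1 = q.1 ∧ (p.2.val + 1 = q.2.val ∨ q.2.val + 1 = p.2.val)) ∨
    (p.2 = q.2 ∧ (p.1.val + 1 = q.1.val ∨ q.1.val + 1 = p.1.val))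
  symm := by
    constructor
    rintro p q (⟨h1, h2⟩ | ⟨h1, h2⟩)
    · exact Or.inl ⟨h1.symm, h2.symm⟩
    · exact Or.inr ⟨h1.symm, h2.symm⟩
  loopless := by
    constructor
    rintro p (⟨_, h⟩ | ⟨_, h⟩) <;> omega

/-- A grid-major representation of `G` of height `H`: a labeling of the grid points of
a `W × H` grid (`W ≥ 1`) by vertices of `G` such that every vertex is used, the grid
points carrying a fixed vertex induce a connected subgraph of the grid, and every edge
of `G` is witnessed by a grid edge. -/
def IsGridMajorRep {V : Type*} (G : SimpleGraph V) (W H : ℕ)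
    (lab : Fin W × Fin H → V) : Prop :=
  1 ≤ W ∧
  Function.Surjective lab ∧
  (∀ v : V, ((gridGraph W H).induce {p | lab p = v}).Connected) ∧
  (∀ v w : V, G.Adj v w →
    ∃ p q : Fin W × Fin H, (gridGraph W H).Adj p q ∧ lab p = v ∧ lab q = w)

/-- A simple grid-major representation: in every column, the grid points labeled by
any fixed vertex are consecutive. -/
def IsSimpleGridMajorRep {V : Type*} (G : SimpleGraph V) (W H : ℕ)
    (lab : Fin W × Fin H → V) : Prop :=
  IsGridMajorRep G W H lab ∧
  ∀ (c : Fin W) (v : V) (r₁ r₂ r₃ : Fin H), r₁ ≤ r₂ → r₂ ≤ r₃ →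
    lab (c, r₁) = v → lab (c, r₃) = v → lab (c, r₂) = v

/-- The grid-major height `GMh(G)`: the least height of a grid-major representation. -/
noncomputable def gridMajorHeight {V : Type*} (G : SimpleGraph V) : ℕ :=
  sInf {H | ∃ W lab, IsGridMajorRep G W H lab}

/-- The simple grid-major height `sGMh(G)`. -/
noncomputable def simpleGridMajorHeight {V : Type*} (G : SimpleGraph V) : ℕ :=
  sInf {H | ∃ W lab, IsSimpleGridMajorRep G W H lab}

/-- A path decomposition of `G` with bags `X 0, …, X (L-1)`. -/
def IsPathDecomposition {V : Type*} (G : SimpleGraph V) (L : ℕ)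
    (X : Fin L → Finset V) : Prop :=
  (∀ v : V, ∃ i, v ∈ X i) ∧
  (∀ (v : V) (i j k : Fin L), i ≤ j → j ≤ k → v ∈ X i → v ∈ X k → v ∈ X j) ∧
  (∀ v w : V, G.Adj v w → ∃ i, v ∈ X i ∧ w ∈ X i)

/-- The pathwidth of a graph: the least width (maximum bag size minus one) of a
path decomposition. -/
noncomputable def pathwidth {V : Type*} (G : SimpleGraph V) : ℕ :=
  sInf {k | ∃ (L : ℕ) (X : Fin L → Finset V),
    IsPathDecomposition G L X ∧ ∀ i, (X i).card ≤ k + 1}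

/-!
Number the grid points column by column, so that grid neighbours receive numbers at most `H`
apart, and let the `i`-th bag consist of the labels of the `H + 1` grid points numbered
`i, …, i + H`. Every grid edge, hence every edge of `G`, lies in one such window, and a
connected set of grid points cannot jump over a window of `H + 1` consecutive numbers, so the
bags containing a vertex form an interval.
-/

def IsMinorModel {α V : Type*} (Γ : SimpleGraph α) (G : SimpleGraph V) (lab : α → V) : Prop :=
  Function.Surjective lab ∧
  (∀ v : V, (Γ.induce {p | lab p = v}).Connected) ∧
  ∀ v w : V, G.Adj v w → ∃ p q : α, Γ.Adj p q ∧ lab p = v ∧ lab q = w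

theorem IsGridMajorRep.isMinorModel {V : Type*} {G : SimpleGraph V} {W H : ℕ}
    {lab : Fin W × Fin H → V} (hrep : IsGridMajorRep G W H lab) :
    IsMinorModel (gridGraph W H) G lab :=
  hrep.2

theorem gridGraph_adj_finProdFinEquiv_le {W H : ℕ} {p q : Fin W × Fin H}
    (h : (gridGraph W H).Adj p q) : (finProdFinEquiv q : ℕ) ≤ finProdFinEquiv p + H := by
  obtain ⟨hcol, hrow⟩ | ⟨hrow, hcol⟩ := h
  · simp only [finProdFinEquiv_apply_val, hcol]
    omega
  · simp only [finProdFinEquiv_apply_val, hrow]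
    rcases hcol with hcol | hcol <;> rw [← hcol, Nat.mul_succ] <;> omega

theorem SimpleGraph.Reachable.exists_mem_Icc {α : Type*} {Γ : SimpleGraph α} {f : α → ℕ}
    {b : ℕ} (hf : ∀ p q, Γ.Adj p q → f q ≤ f p + b) {p q : α} (hpq : Γ.Reachable p q)
    {j : ℕ} (hp : f p ≤ j) (hq : j ≤ f q) : ∃ r, f r ∈ Finset.Icc j (j + b) := by
  obtain ⟨w⟩ := hpq
  induction w with
  | nil => exact ⟨_, Finset.mem_Icc.2 ⟨hq, by omega⟩⟩
  | @cons p c q hadj _ ih =>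
    by_cases hc : f c ≤ j
    · exact ih hc hq
    · exact ⟨c, Finset.mem_Icc.2 ⟨by omega, by have := hf p c hadj; omega⟩⟩

section WindowBag

variable {α V : Type*} [Fintype α] [DecidableEq V] (lab : α → V) (f : α → ℕ) (b : ℕ)

def windowBag (i : ℕ) : Finset V :=
  (Finset.univ.filter fun p => f p ∈ Finset.Icc i (i + b)).image lab

variable {lab f b}

theorem mem_windowBag {i : ℕ} {v : V} :
    v ∈ windowBag lab f b i ↔ ∃ p, f p ∈ Finset.Icc i (i + b) ∧ lab p = v := by
  simp [windowBag]

theorem card_windowBag_le (hf : Function.Injective f) (i : ℕ) :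
    (windowBag lab f b i).card ≤ b + 1 :=
  calc (windowBag lab f b i).card
      ≤ (Finset.univ.filter fun p => f p ∈ Finset.Icc i (i + b)).card := Finset.card_image_le
    _ ≤ (Finset.Icc i (i + b)).card :=
        Finset.card_le_card_of_injOn f (fun p hp => (Finset.mem_filter.1 hp).2) hf.injOn
    _ = b + 1 := by rw [Nat.card_Icc]; omega

variable {Γ : SimpleGraph α} {G : SimpleGraph V}

theorem mem_windowBag_of_le_of_le (hlab : ∀ v : V, (Γ.induce {p | lab p = v}).Connected)
    (hband : ∀ p q, Γ.Adj p q → f q ≤ f p + b) {v : V} {i j k : ℕ}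
    (hij : i ≤ j) (hjk : j ≤ k)
    (hi : v ∈ windowBag lab f b i) (hk : v ∈ windowBag lab f b k) :
    v ∈ windowBag lab f b j := by
  obtain ⟨p, hp, rfl⟩ := mem_windowBag.1 hi
  obtain ⟨q, hq, hpq⟩ := mem_windowBag.1 hk
  rw [Finset.mem_Icc] at hp hq
  by_cases hpj : j ≤ f p
  · exact mem_windowBag.2 ⟨p, Finset.mem_Icc.2 ⟨hpj, by omega⟩, rfl⟩
  -- A walk from `p` to `q` inside the branch set of `lab p` has to cross the window at `j`.
  have hreach := (hlab (lab p)).preconnected ⟨p, rfl⟩ ⟨q, hpq⟩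
  obtain ⟨⟨r, hr⟩, hrj⟩ := hreach.exists_mem_Icc (f := fun r => f r.1) (j := j)
    (fun _ _ hadj => hband _ _ hadj) (not_le.1 hpj).le (hjk.trans hq.1)
  exact mem_windowBag.2 ⟨r, hrj, hr⟩

theorem isPathDecomposition_windowBag (hmodel : IsMinorModel Γ G lab) {N : ℕ}
    (hN : ∀ p, f p < N) (hband : ∀ p q, Γ.Adj p q → f q ≤ f p + b) :
    IsPathDecomposition G N fun i => windowBag lab f b i := by
  obtain ⟨hsurj, hlab, hedge⟩ := hmodel
  refine ⟨fun v => ?_, fun v i j k hij hjk => mem_windowBag_of_le_of_le hlab hband hij hjk,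
    fun v w hvw => ?_⟩
  · obtain ⟨p, rfl⟩ := hsurj v
    exact ⟨⟨f p, hN p⟩, mem_windowBag.2 ⟨p, by simp, rfl⟩⟩
  · obtain ⟨p, q, hpq, rfl, rfl⟩ := hedge v w hvw
    have hqp := hband p q hpq
    have hpq' := hband q p hpq.symm
    refine ⟨⟨min (f p) (f q), (min_le_left _ _).trans_lt (hN p)⟩,
      mem_windowBag.2 ⟨p, ?_, rfl⟩, mem_windowBag.2 ⟨q, ?_, rfl⟩⟩ <;>
      simp only [Finset.mem_Icc] <;> omega

end WindowBag

theorem pathwidth_le_of_isMinorModel {α V : Type*} [Fintype α] {Γ : SimpleGraph α}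
    {G : SimpleGraph V} {lab : α → V} (hmodel : IsMinorModel Γ G lab) {f : α → ℕ}
    (hf : Function.Injective f) {N : ℕ} (hN : ∀ p, f p < N) {b : ℕ}
    (hband : ∀ p q, Γ.Adj p q → f q ≤ f p + b) : pathwidth G ≤ b := by
  classical
  exact Nat.sInf_le ⟨N, _, isPathDecomposition_windowBag hmodel hN hband,
    fun i => card_windowBag_le hf i⟩

/-- `pw(G) ≤ GMh(G)`: if a graph has a grid-major representation of
height `H`, then its pathwidth is at most `H`. -/
theorem pathwidth_le_of_gridMajor {V : Type*} (G : SimpleGraph V) (W H : ℕ)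
    (lab : Fin W × Fin H → V) (hrep : IsGridMajorRep G W H lab) :
    pathwidth G ≤ H :=
  pathwidth_le_of_isMinorModel hrep.isMinorModel
    (Fin.val_injective.comp finProdFinEquiv.injective) (fun p => (finProdFinEquiv p).isLt)
    fun _ _ => gridGraph_adj_finProdFinEquiv_le
end

section
/- For every triangulated planar graph G, sGMh(G) ≤ VRh(G): every flat visibility representation of G of height h can be converted into a simple grid-major representation of G of height h. -/
open SimpleGraph

/-- A (combinatorially embedded, oriented) triangulated planar graph: a maximal planar
graph together with its set of triangular faces (including the outer face).  The field
`left` records the orientation of the embedding: `left x y` is the third vertex of the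
face lying to the left of the directed edge `(x, y)`. -/
structure PlaneTriangulation (V : Type*) [Fintype V] [DecidableEq V] where
  graph : SimpleGraph V
  faces : Finset (Finset V)
  three_le_card : 3 ≤ Fintype.card V
  graph_connected : graph.Connected
  face_card : ∀ f ∈ faces, f.card = 3
  face_clique : ∀ f ∈ faces, ∀ x ∈ f, ∀ y ∈ f, x ≠ y → graph.Adj x y
  edge_two_faces : ∀ x y : V, graph.Adj x y →
    (faces.filter fun f => x ∈ f ∧ y ∈ f).card = 2
  left : V → V → V
  left_mem_faces : ∀ x y : V, graph.Adj x y → ({x, y, left x y} : Finset V) ∈ faces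
  left_ne : ∀ x y : V, graph.Adj x y → left x y ≠ left y x
  euler : faces.card + 4 = 2 * Fintype.card V

/-- The horizontal bar with `y`-coordinate `yb` and `x`-range `[xl, xr]`. -/
def barSet (yb xl xr : ℤ) : Set (ℝ × ℝ) :=
  {p | p.2 = (yb : ℝ) ∧ (xl : ℝ) ≤ p.1 ∧ p.1 ≤ (xr : ℝ)}

/-- A flat visibility representation of `G` of height `h`: every vertex `v` is a
horizontal bar at integer `y`-coordinate `ybar v ∈ {1, …, h}` with `x`-range
`[xl v, xr v]`; bars are pairwise disjoint; every edge `(u,v)` has a horizontal or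
vertical straight-line segment of visibility `vis u v` joining the two bars and meeting
no other bar; and the visibility segments of distinct edges do not cross. -/
def IsFlatVisibilityRep {V : Type*} (G : SimpleGraph V) (h : ℕ)
    (ybar xl xr : V → ℤ) (vis : V → V → Set (ℝ × ℝ)) : Prop :=
  (∀ v : V, 1 ≤ ybar v ∧ ybar v ≤ (h : ℤ) ∧ xl v ≤ xr v) ∧
  (∀ u v : V, u ≠ v →
    Disjoint (barSet (ybar u) (xl u) (xr u)) (barSet (ybar v) (xl v) (xr v))) ∧
  (∀ u v : V, vis u v = vis v u) ∧
  (∀ u v : V, G.Adj u v →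
    ∃ p q : ℝ × ℝ, vis u v = segment ℝ p q ∧ (p.1 = q.1 ∨ p.2 = q.2) ∧
      p ∈ barSet (ybar u) (xl u) (xr u) ∧ q ∈ barSet (ybar v) (xl v) (xr v) ∧
      ∀ w : V, w ≠ u → w ≠ v → Disjoint (vis u v) (barSet (ybar w) (xl w) (xr w))) ∧
  (∀ u v x y : V, G.Adj u v → G.Adj x y → s(u, v) ≠ s(x, y) →
    Disjoint (vis u v) (vis x y))

open Set

/-!
Extend every bar leftwards through each horizontal sightline ending at it. Within a row the
extended bars are still pairwise disjoint, and two bars joined by a horizontal edge now touch.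
Cut the plane by finitely many vertical lines: one through the right end of every bar and one
through a sightline of every vertical edge. In each of these columns a cell lying on an
extended bar is labelled by its vertex, and any other cell copies the nearest labelled cell
below it (above, if there is none below). Then every column is a stack of consecutive blocks;
a vertex occupies an interval of columns in its own row, and in each of them a block through
that row, so its cells are connected; a vertical sightline meets no extended bar strictly
between its ends, so in its column the lower vertex sits directly under the upper one; and
the column following the right end of a bar lies on the extended bar of its right neighbour.
-/

namespace Finset

variable {α : Type*} [LinearOrder α] (s : Finset α)

noncomputable def snapDown (a : α) : α :=
  if h : (s.filter (· ≤ a)).Nonempty then (s.filter (· ≤ a)).max' h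
  else if h' : s.Nonempty then s.min' h' else a

variable {s}

theorem snapDown_mem (hs : s.Nonempty) (a : α) : s.snapDown a ∈ s := by
  unfold snapDown
  split_ifs with h
  · exact (mem_filter.mp (max'_mem _ h)).1
  · exact min'_mem s hs

theorem snapDown_le {a b : α} (hb : b ∈ s) (hba : b ≤ a) : s.snapDown a ≤ a := by
  have h : (s.filter (· ≤ a)).Nonempty := ⟨b, mem_filter.mpr ⟨hb, hba⟩⟩
  rw [snapDown, dif_pos h]
  exact (mem_filter.mp (max'_mem _ h)).2

theorem snapDown_of_mem {a : α} (ha : a ∈ s) : s.snapDown a = a :=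
  le_antisymm (snapDown_le ha le_rfl) <| by
    rw [snapDown, dif_pos ⟨a, mem_filter.mpr ⟨ha, le_rfl⟩⟩]
    exact le_max' (s.filter (· ≤ a)) a (mem_filter.mpr ⟨ha, le_rfl⟩)

theorem monotone_snapDown : Monotone s.snapDown := by
  intro a b hab
  have hsub : s.filter (· ≤ a) ⊆ s.filter (· ≤ b) := fun x hx =>
    mem_filter.mpr ⟨(mem_filter.mp hx).1, (mem_filter.mp hx).2.trans hab⟩
  by_cases ha : (s.filter (· ≤ a)).Nonempty
  · rw [snapDown, snapDown, dif_pos ha, dif_pos (ha.mono hsub)]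
    exact max'_subset _ hsub
  · by_cases hs : s.Nonempty
    · rw [snapDown, dif_neg ha, dif_pos hs]
      exact min'_le s _ (snapDown_mem hs b)
    · have hb : ¬ (s.filter (· ≤ b)).Nonempty := fun h => hs (h.mono (filter_subset _ s))
      rwa [snapDown, snapDown, dif_neg ha, dif_neg hs, dif_neg hb, dif_neg hs]

theorem snapDown_eq_of_gap {a b : α} (hb : b ∈ s) (hba : b ≤ a)
    (hgap : ∀ c ∈ s, b < c → a < c) : s.snapDown a = b := by
  have hle : b ≤ s.snapDown a := snapDown_of_mem hb ▸ monotone_snapDown hba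
  by_contra hne
  exact (snapDown_le hb hba).not_gt (hgap _ (snapDown_mem ⟨b, hb⟩ a) (hle.lt_of_ne' hne))

theorem exists_orderEmbOfFin_eq {x : α} (hx : x ∈ s) :
    ∃ c, s.orderEmbOfFin rfl c = x := by
  rwa [← Set.mem_range, range_orderEmbOfFin]

end Finset

theorem SimpleGraph.induce_reachable_of_uIcc {α : Type*} {G : SimpleGraph α} {S : Set α}
    {n : ℕ} (f : Fin n → α) (hf : ∀ i j : Fin n, i.val + 1 = j.val → G.Adj (f i) (f j))
    {a b : Fin n} (hS : ∀ t ∈ uIcc a b, f t ∈ S) :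
    (G.induce S).Reachable ⟨f a, hS a left_mem_uIcc⟩ ⟨f b, hS b right_mem_uIcc⟩ := by
  wlog hab : a ≤ b generalizing a b
  · exact (this (fun t ht => hS t (uIcc_comm a b ▸ ht)) (le_of_not_ge hab)).symm
  obtain ⟨b, hb⟩ := b
  induction b with
  | zero => obtain rfl : a = ⟨0, hb⟩ := Fin.ext (Nat.le_zero.mp hab); rfl
  | succ k ih =>
    rcases hab.eq_or_lt with rfl | hlt
    · rfl
    have hak : a ≤ ⟨k, by omega⟩ := Fin.le_iff_val_le_val.mpr (Nat.lt_succ_iff.mp hlt)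
    have hS' : ∀ t ∈ uIcc a ⟨k, by omega⟩, f t ∈ S := fun t ht => hS t <| by
      rw [uIcc_of_le hak] at ht
      rw [uIcc_of_le hab]
      exact ⟨ht.1, ht.2.trans (Fin.le_iff_val_le_val.mpr (Nat.le_succ k))⟩
    exact (ih (by omega) hS' hak).trans (Adj.reachable (hf _ _ rfl))

theorem gridGraph_induce_connected {W H : ℕ} {S : Set (Fin W × Fin H)} (ρ : Fin H)
    (hne : S.Nonempty) (hcol : ∀ c, {r | (c, r) ∈ S}.OrdConnected)
    (hanchor : ∀ c r, (c, r) ∈ S → (c, ρ) ∈ S) (hrow : {c | (c, ρ) ∈ S}.OrdConnected) :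
    ((gridGraph W H).induce S).Connected := by
  have toAnchor : ∀ c r (hp : (c, r) ∈ S),
      ((gridGraph W H).induce S).Reachable ⟨(c, r), hp⟩ ⟨(c, ρ), hanchor c r hp⟩ :=
    fun c r hp => induce_reachable_of_uIcc (fun t => (c, t))
      (fun _ _ h => Or.inl ⟨rfl, Or.inl h⟩) ((hcol c).uIcc_subset hp (hanchor c r hp))
  have alongRow : ∀ c c' (hc : (c, ρ) ∈ S) (hc' : (c', ρ) ∈ S),
      ((gridGraph W H).induce S).Reachable ⟨(c, ρ), hc⟩ ⟨(c', ρ), hc'⟩ :=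
    fun c c' hc hc' => induce_reachable_of_uIcc (fun t => (t, ρ))
      (fun _ _ h => Or.inr ⟨rfl, Or.inl h⟩) (hrow.uIcc_subset hc hc')
  refine (connected_iff _).mpr ⟨?_, hne.to_subtype⟩
  rintro ⟨⟨c, r⟩, hp⟩ ⟨⟨c', r'⟩, hq⟩
  exact ((toAnchor c r hp).trans (alongRow c c' _ _)).trans (toAnchor c' r' hq).symm

theorem Fin.exists_coe_add_one_eq {n : ℕ} {r : ℤ} (h₁ : 1 ≤ r) (h₂ : r ≤ n) :
    ∃ i : Fin n, (i : ℤ) + 1 = r :=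
  ⟨⟨(r - 1).toNat, by omega⟩, by simp only [Int.toNat_sub_of_le h₁]; omega⟩

namespace IsFlatVisibilityRep

variable {V : Type*} {G : SimpleGraph V} {h : ℕ} {ybar xl xr : V → ℤ}
  {vis : V → V → Set (ℝ × ℝ)}

theorem one_le_ybar (hrep : IsFlatVisibilityRep G h ybar xl xr vis) (v : V) : 1 ≤ ybar v :=
  (hrep.1 v).1

theorem ybar_le (hrep : IsFlatVisibilityRep G h ybar xl xr vis) (v : V) : ybar v ≤ h :=
  (hrep.1 v).2.1

theorem xl_le_xr (hrep : IsFlatVisibilityRep G h ybar xl xr vis) (v : V) : xl v ≤ xr v :=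
  (hrep.1 v).2.2

theorem disjoint_barSet (hrep : IsFlatVisibilityRep G h ybar xl xr vis) {u v : V} (huv : u ≠ v) :
    Disjoint (barSet (ybar u) (xl u) (xr u)) (barSet (ybar v) (xl v) (xr v)) :=
  hrep.2.1 u v huv

theorem exists_segment (hrep : IsFlatVisibilityRep G h ybar xl xr vis) {u v : V}
    (huv : G.Adj u v) :
    ∃ p q : ℝ × ℝ, vis u v = segment ℝ p q ∧ (p.1 = q.1 ∨ p.2 = q.2) ∧
      p ∈ barSet (ybar u) (xl u) (xr u) ∧ q ∈ barSet (ybar v) (xl v) (xr v) ∧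
      ∀ w : V, w ≠ u → w ≠ v → Disjoint (vis u v) (barSet (ybar w) (xl w) (xr w)) :=
  hrep.2.2.2.1 u v huv

theorem disjoint_vis (hrep : IsFlatVisibilityRep G h ybar xl xr vis) {u v a b : V}
    (huv : G.Adj u v) (hab : G.Adj a b) (hne : s(u, v) ≠ s(a, b)) :
    Disjoint (vis u v) (vis a b) :=
  hrep.2.2.2.2 u v a b huv hab hne

theorem exists_row (hrep : IsFlatVisibilityRep G h ybar xl xr vis) (v : V) :
    ∃ i : Fin h, (i : ℤ) + 1 = ybar v :=
  Fin.exists_coe_add_one_eq (hrep.one_le_ybar v) (hrep.ybar_le v)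

end IsFlatVisibilityRep

namespace FlatVisibility

variable {V : Type*} (G : SimpleGraph V) (ybar xl xr : V → ℤ)
  (vis : V → V → Set (ℝ × ℝ))

def IsChannel (a b : V) : Prop := G.Adj a b ∧ ybar a = ybar b ∧ xr a < xl b

def extBar (v : V) : Set ℝ :=
  Icc (xl v : ℝ) (xr v) ∪
    {x | ∃ a, IsChannel G ybar xl xr a v ∧ (xr a : ℝ) < x ∧ x < xl v}

def IsVerticalSightline (u v : V) (x : ℝ) : Prop :=
  x ∈ Icc (xl u : ℝ) (xr u) ∧ x ∈ Icc (xl v : ℝ) (xr v) ∧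
    ∀ t : ℤ, ybar u < t → t < ybar v → (x, (t : ℝ)) ∈ vis u v

open Classical in
noncomputable def occupiedRows [Fintype V] (x : ℝ) : Finset ℤ :=
  (Finset.univ.filter fun v => x ∈ extBar G ybar xl xr v).image ybar

/-- Arbitrary in a column that meets no extended bar. -/
noncomputable def colLabel [Fintype V] [Nonempty V] (x : ℝ) (r : ℤ) : V :=
  Classical.epsilon fun v =>
    x ∈ extBar G ybar xl xr v ∧ ybar v = (occupiedRows G ybar xl xr x).snapDown r

variable {G ybar xl xr vis} {h : ℕ}

theorem IsChannel.mem_vis (hrep : IsFlatVisibilityRep G h ybar xl xr vis) {a b : V}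
    (hab : IsChannel G ybar xl xr a b) {x : ℝ} (hx : x ∈ Icc (xr a : ℝ) (xl b)) :
    (x, (ybar a : ℝ)) ∈ vis a b := by
  obtain ⟨p, q, hseg, -, hp, hq, -⟩ := hrep.exists_segment hab.1
  have hp' : p = (p.1, (ybar a : ℝ)) := Prod.ext rfl hp.1
  have hq' : q = (q.1, (ybar a : ℝ)) := Prod.ext rfl (by rw [hq.1, hab.2.1])
  rw [hseg, hp', hq', ← Prod.image_mk_segment_left]
  refine ⟨x, ?_, rfl⟩
  rw [segment_eq_Icc (hp.2.2.trans (hx.1.trans (hx.2.trans hq.2.1)))]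
  exact ⟨hp.2.2.trans hx.1, hx.2.trans hq.2.1⟩

theorem IsChannel.notMem_Icc (hrep : IsFlatVisibilityRep G h ybar xl xr vis) {a b w : V}
    (hab : IsChannel G ybar xl xr a b) {x : ℝ} (hx : x ∈ Ioo (xr a : ℝ) (xl b))
    (hrow : ybar w = ybar b) : x ∉ Icc (xl w : ℝ) (xr w) := by
  intro hw
  by_cases hwa : w = a
  · exact hw.2.not_gt (hwa ▸ hx.1)
  by_cases hwb : w = b
  · exact hw.1.not_gt (hwb ▸ hx.2)
  obtain ⟨p, q, -, -, -, -, hdisj⟩ := hrep.exists_segment hab.1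
  refine Set.disjoint_left.mp (hdisj w hwa hwb) (hab.mem_vis hrep (Ioo_subset_Icc_self hx)) ?_
  exact ⟨by rw [hrow, hab.2.1], hw⟩

theorem IsChannel.asymm (hrep : IsFlatVisibilityRep G h ybar xl xr vis)
    {a b : V} (hab : IsChannel G ybar xl xr a b) : ¬ IsChannel G ybar xl xr b a := fun hba => by
  linarith [hrep.xl_le_xr a, hrep.xl_le_xr b, hab.2.2, hba.2.2]

theorem eq_of_mem_extBar (hrep : IsFlatVisibilityRep G h ybar xl xr vis) {u v : V} {x : ℝ}
    (hu : x ∈ extBar G ybar xl xr u) (hv : x ∈ extBar G ybar xl xr v)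
    (hrow : ybar u = ybar v) : u = v := by
  rcases hu with hu | ⟨a, hau, hxa, hxu⟩ <;> rcases hv with hv | ⟨b, hbv, hxb, hxv⟩
  · by_contra hne
    exact Set.disjoint_left.mp (hrep.disjoint_barSet hne)
      (show (x, (ybar u : ℝ)) ∈ barSet _ _ _ from ⟨rfl, hu.1, hu.2⟩)
      ⟨by rw [hrow], hv.1, hv.2⟩
  · exact absurd hu (hbv.notMem_Icc hrep ⟨hxb, hxv⟩ hrow)
  · exact absurd hv (hau.notMem_Icc hrep ⟨hxa, hxu⟩ hrow.symm)
  · by_contra hne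
    have hedge : s(a, u) ≠ s(b, v) := by
      rw [Ne, Sym2.eq_iff]
      rintro (⟨-, rfl⟩ | ⟨rfl, rfl⟩)
      exacts [hne rfl, hau.asymm hrep hbv]
    refine Set.disjoint_left.mp (hrep.disjoint_vis hau.1 hbv.1 hedge)
      (hau.mem_vis hrep ⟨hxa.le, hxu.le⟩) ?_
    rw [hau.2.1, hrow, ← hbv.2.1]
    exact hbv.mem_vis hrep ⟨hxb.le, hxv.le⟩

theorem notMem_extBar_of_mem_vis (hrep : IsFlatVisibilityRep G h ybar xl xr vis)
    {u v w : V} (huv : G.Adj u v) {x : ℝ} (hx : (x, (ybar w : ℝ)) ∈ vis u v)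
    (hwu : ybar w ≠ ybar u) (hwv : ybar w ≠ ybar v) : x ∉ extBar G ybar xl xr w := by
  rintro (hw | ⟨a, haw, hxa, hxw⟩)
  · obtain ⟨p, q, -, -, -, -, hdisj⟩ := hrep.exists_segment huv
    exact Set.disjoint_left.mp (hdisj w (by rintro rfl; exact hwu rfl)
      (by rintro rfl; exact hwv rfl)) hx ⟨rfl, hw⟩
  · have hedge : s(u, v) ≠ s(a, w) := by
      rw [Ne, Sym2.eq_iff]
      rintro (⟨-, rfl⟩ | ⟨rfl, -⟩)
      exacts [hwv rfl, hwu rfl]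
    refine Set.disjoint_left.mp (hrep.disjoint_vis huv haw.1 hedge) hx ?_
    rw [← haw.2.1]
    exact haw.mem_vis hrep ⟨hxa.le, hxw.le⟩

theorem ordConnected_extBar {v : V} (hv : xl v ≤ xr v) :
    (extBar G ybar xl xr v).OrdConnected := by
  refine ⟨fun x₁ h₁ x₃ h₃ x₂ ⟨h₁₂, h₂₃⟩ => ?_⟩
  have hv' : (xl v : ℝ) ≤ xr v := by exact_mod_cast hv
  by_cases hx₂ : (xl v : ℝ) ≤ x₂
  · refine Or.inl ⟨hx₂, h₂₃.trans ?_⟩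
    rcases h₃ with h₃ | ⟨-, -, -, h₃⟩
    exacts [h₃.2, h₃.le.trans hv']
  · rcases h₁ with h₁ | ⟨a, hav, hxa, -⟩
    · exact absurd (h₁.1.trans h₁₂) hx₂
    · exact Or.inr ⟨a, hav, hxa.trans_le h₁₂, not_le.mp hx₂⟩

theorem isChannel_or_isChannel (hrep : IsFlatVisibilityRep G h ybar xl xr vis) {u v : V}
    (huv : G.Adj u v) (hrow : ybar u = ybar v) :
    IsChannel G ybar xl xr u v ∨ IsChannel G ybar xl xr v u := by
  by_contra! hcon
  have hvu : xl v ≤ xr u := not_lt.mp fun hlt => hcon.1 ⟨huv, hrow, hlt⟩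
  have huv' : xl u ≤ xr v := not_lt.mp fun hlt => hcon.2 ⟨huv.symm, hrow.symm, hlt⟩
  have hu := hrep.xl_le_xr u
  have hv := hrep.xl_le_xr v
  obtain ⟨m, hum, hvm, hmu, hmv⟩ : ∃ m : ℤ, xl u ≤ m ∧ xl v ≤ m ∧ m ≤ xr u ∧ m ≤ xr v :=
    ⟨max (xl u) (xl v), le_max_left _ _, le_max_right _ _, max_le hu hvu, max_le huv' hv⟩
  have hmu' : ((m : ℝ), (ybar u : ℝ)) ∈ barSet (ybar u) (xl u) (xr u) :=
    ⟨rfl, Int.cast_le.mpr hum, Int.cast_le.mpr hmu⟩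
  have hmv' : ((m : ℝ), (ybar u : ℝ)) ∈ barSet (ybar v) (xl v) (xr v) :=
    ⟨by rw [hrow], Int.cast_le.mpr hvm, Int.cast_le.mpr hmv⟩
  exact Set.disjoint_left.mp (hrep.disjoint_barSet huv.ne) hmu' hmv'

theorem exists_isVerticalSightline (hrep : IsFlatVisibilityRep G h ybar xl xr vis) {u v : V}
    (huv : G.Adj u v) (hlt : ybar u < ybar v) :
    ∃ x, IsVerticalSightline ybar xl xr vis u v x := by
  obtain ⟨p, q, hseg, hdir, hp, hq, -⟩ := hrep.exists_segment huv
  have hpq : p.1 = q.1 := hdir.resolve_right fun hpq => hlt.ne (by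
    have : (ybar u : ℝ) = ybar v := hp.1 ▸ hq.1 ▸ hpq
    exact_mod_cast this)
  refine ⟨p.1, ⟨hp.2.1, hp.2.2⟩, ⟨hpq ▸ hq.2.1, hpq ▸ hq.2.2⟩, fun t hut htv => ?_⟩
  have hp' : p = (p.1, (ybar u : ℝ)) := Prod.ext rfl hp.1
  have hq' : q = (p.1, (ybar v : ℝ)) := Prod.ext hpq.symm hq.1
  rw [hseg, hp', hq', ← Prod.image_mk_segment_right]
  refine ⟨t, ?_, rfl⟩
  have hut' : (ybar u : ℝ) ≤ t := by exact_mod_cast hut.le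
  have htv' : (t : ℝ) ≤ ybar v := by exact_mod_cast htv.le
  rw [segment_eq_Icc (hut'.trans htv')]
  exact ⟨hut', htv'⟩

theorem xr_mem_extBar {v : V} (hv : xl v ≤ xr v) : (xr v : ℝ) ∈ extBar G ybar xl xr v :=
  Or.inl ⟨by exact_mod_cast hv, le_rfl⟩

theorem IsChannel.Ioc_subset_extBar {a b : V} (hab : IsChannel G ybar xl xr a b) :
    Ioc (xr a : ℝ) (xr b) ⊆ extBar G ybar xl xr b := fun x hx => by
  by_cases hxb : x < xl b
  exacts [Or.inr ⟨a, hab, hx.1, hxb⟩, Or.inl ⟨not_lt.mp hxb, hx.2⟩]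

section Columns

variable [Fintype V]

theorem mem_occupiedRows {x : ℝ} {r : ℤ} :
    r ∈ occupiedRows G ybar xl xr x ↔ ∃ v, x ∈ extBar G ybar xl xr v ∧ ybar v = r := by
  simp [occupiedRows]

variable [Nonempty V]

theorem colLabel_eq_iff (hrep : IsFlatVisibilityRep G h ybar xl xr vis) {x : ℝ}
    (hx : ∃ w, x ∈ extBar G ybar xl xr w) {r : ℤ} {v : V} :
    colLabel G ybar xl xr x r = v ↔
      x ∈ extBar G ybar xl xr v ∧ ybar v = (occupiedRows G ybar xl xr x).snapDown r := by
  obtain ⟨w, hw⟩ := hx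
  have hspec := Classical.epsilon_spec (mem_occupiedRows.mp
    (Finset.snapDown_mem ⟨ybar w, mem_occupiedRows.mpr ⟨w, hw, rfl⟩⟩ r))
  refine ⟨fun hv => hv ▸ hspec, fun ⟨hv, hrow⟩ => ?_⟩
  exact eq_of_mem_extBar hrep hspec.1 hv (hspec.2.trans hrow.symm)

theorem colLabel_ybar (hrep : IsFlatVisibilityRep G h ybar xl xr vis) {x : ℝ} {v : V}
    (hv : x ∈ extBar G ybar xl xr v) : colLabel G ybar xl xr x (ybar v) = v :=
  (colLabel_eq_iff hrep ⟨v, hv⟩).mpr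
    ⟨hv, (Finset.snapDown_of_mem (mem_occupiedRows.mpr ⟨v, hv, rfl⟩)).symm⟩

theorem ordConnected_colLabel (hrep : IsFlatVisibilityRep G h ybar xl xr vis) {x : ℝ}
    (hx : ∃ w, x ∈ extBar G ybar xl xr w) (v : V) :
    {r | colLabel G ybar xl xr x r = v}.OrdConnected := by
  refine ⟨fun r₁ h₁ r₃ h₃ r₂ ⟨h₁₂, h₂₃⟩ => ?_⟩
  simp only [mem_ofPred_eq, colLabel_eq_iff hrep hx] at h₁ h₃ ⊢
  refine ⟨h₁.1, le_antisymm ?_ ?_⟩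
  · exact h₁.2 ▸ Finset.monotone_snapDown h₁₂
  · exact h₃.2 ▸ Finset.monotone_snapDown h₂₃

theorem colLabel_of_isVerticalSightline (hrep : IsFlatVisibilityRep G h ybar xl xr vis)
    {u v : V} (huv : G.Adj u v) (hlt : ybar u < ybar v) {x : ℝ}
    (hx : IsVerticalSightline ybar xl xr vis u v x) :
    colLabel G ybar xl xr x (ybar v - 1) = u := by
  have hu : x ∈ extBar G ybar xl xr u := Or.inl hx.1
  refine (colLabel_eq_iff hrep ⟨u, hu⟩).mpr ⟨hu, ?_⟩
  refine (Finset.snapDown_eq_of_gap (mem_occupiedRows.mpr ⟨u, hu, rfl⟩) (by omega) ?_).symm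
  intro t ht hut
  obtain ⟨w, hw, rfl⟩ := mem_occupiedRows.mp ht
  by_contra hwv
  exact notMem_extBar_of_mem_vis hrep huv (hx.2.2 _ hut (by omega)) hut.ne' (by omega) hw

end Columns

variable (G ybar xl xr vis)

/-- Grid row `i` lies on the line `y = i + 1`. -/
noncomputable def gridLabel [Fintype V] [Nonempty V] (X : Finset ℝ) (p : Fin X.card × Fin h) :
    V :=
  colLabel G ybar xl xr (X.orderEmbOfFin rfl p.1) ((p.2 : ℤ) + 1)

structure IsColumnSet (X : Finset ℝ) : Prop where
  occupied : ∀ x ∈ X, ∃ v, x ∈ extBar G ybar xl xr v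
  xr_mem : ∀ v, (xr v : ℝ) ∈ X
  sightline_mem : ∀ u v, G.Adj u v → ybar u < ybar v →
    ∃ x ∈ X, IsVerticalSightline ybar xl xr vis u v x

variable {G ybar xl xr vis}

theorem exists_isColumnSet [Fintype V] (hrep : IsFlatVisibilityRep G h ybar xl xr vis) :
    ∃ X, IsColumnSet G ybar xl xr vis X := by
  classical
  choose! sx hsx using
    fun u v (huv : G.Adj u v) hlt => exists_isVerticalSightline hrep huv hlt
  refine ⟨(Finset.univ.image (fun v => (xr v : ℝ)) ∪
      Finset.univ.image (fun e : V × V => sx e.1 e.2)).filter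
      (fun x => ∃ v, x ∈ extBar G ybar xl xr v), fun x hx => (Finset.mem_filter.mp hx).2,
      fun v => ?_, fun u v huv hlt => ?_⟩
  · exact Finset.mem_filter.mpr ⟨by simp, v, xr_mem_extBar (hrep.xl_le_xr v)⟩
  · refine ⟨sx u v, Finset.mem_filter.mpr ⟨?_, u, Or.inl (hsx u v huv hlt).1⟩,
      hsx u v huv hlt⟩
    exact Finset.mem_union_right _ (Finset.mem_image_of_mem _ (Finset.mem_univ (u, v)))

section Grid

variable [Fintype V] [Nonempty V] {X : Finset ℝ}

theorem gridLabel_eq_of_mem (hrep : IsFlatVisibilityRep G h ybar xl xr vis) {c : Fin X.card}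
    {i : Fin h} {v : V} (hc : X.orderEmbOfFin rfl c ∈ extBar G ybar xl xr v)
    (hi : (i : ℤ) + 1 = ybar v) : gridLabel G ybar xl xr X (c, i) = v := by
  rw [gridLabel, hi]
  exact colLabel_ybar hrep hc

namespace IsColumnSet

theorem mem_extBar_of_gridLabel_eq (hX : IsColumnSet G ybar xl xr vis X)
    (hrep : IsFlatVisibilityRep G h ybar xl xr vis) {p : Fin X.card × Fin h} {v : V}
    (hp : gridLabel G ybar xl xr X p = v) : X.orderEmbOfFin rfl p.1 ∈ extBar G ybar xl xr v :=
  ((colLabel_eq_iff hrep (hX.occupied _ (X.orderEmbOfFin_mem rfl p.1))).mp hp).1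

theorem ordConnected_gridLabel_column (hX : IsColumnSet G ybar xl xr vis X)
    (hrep : IsFlatVisibilityRep G h ybar xl xr vis) (c : Fin X.card) (v : V) :
    {i : Fin h | gridLabel G ybar xl xr X (c, i) = v}.OrdConnected :=
  (ordConnected_colLabel hrep (hX.occupied _ (X.orderEmbOfFin_mem rfl c)) v).preimage_mono
    (f := fun i : Fin h => (i : ℤ) + 1) fun _ _ hij => by simpa using hij

theorem connected_induce_gridLabel (hX : IsColumnSet G ybar xl xr vis X)
    (hrep : IsFlatVisibilityRep G h ybar xl xr vis) (v : V) :
    ((gridGraph X.card h).induce {p | gridLabel G ybar xl xr X p = v}).Connected := by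
  obtain ⟨ρ, hρ⟩ := hrep.exists_row v
  obtain ⟨c, hc⟩ := Finset.exists_orderEmbOfFin_eq (hX.xr_mem v)
  have hrow : {c | X.orderEmbOfFin rfl c ∈ extBar G ybar xl xr v}.OrdConnected :=
    (ordConnected_extBar (hrep.xl_le_xr v)).preimage_mono (X.orderEmbOfFin rfl).monotone
  refine gridGraph_induce_connected ρ
    ⟨(c, ρ), gridLabel_eq_of_mem hrep (hc ▸ xr_mem_extBar (hrep.xl_le_xr v)) hρ⟩
    (fun c => hX.ordConnected_gridLabel_column hrep c v)
    (fun c r hcr => gridLabel_eq_of_mem hrep (hX.mem_extBar_of_gridLabel_eq hrep hcr) hρ)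
    ⟨fun c₁ h₁ c₃ h₃ c₂ hc₂ => gridLabel_eq_of_mem hrep
      (hrow.out (hX.mem_extBar_of_gridLabel_eq hrep h₁)
        (hX.mem_extBar_of_gridLabel_eq hrep h₃) hc₂) hρ⟩

theorem exists_gridAdj_of_ybar_lt (hX : IsColumnSet G ybar xl xr vis X)
    (hrep : IsFlatVisibilityRep G h ybar xl xr vis) {u v : V} (huv : G.Adj u v)
    (hlt : ybar u < ybar v) : ∃ p q, (gridGraph X.card h).Adj p q ∧
      gridLabel G ybar xl xr X p = u ∧ gridLabel G ybar xl xr X q = v := by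
  obtain ⟨x, hxX, hx⟩ := hX.sightline_mem u v huv hlt
  obtain ⟨c, rfl⟩ := Finset.exists_orderEmbOfFin_eq hxX
  have := hrep.one_le_ybar u
  have := hrep.ybar_le v
  obtain ⟨i, hi⟩ := Fin.exists_coe_add_one_eq (n := h) (r := ybar v - 1) (by omega) (by omega)
  obtain ⟨j, hj⟩ := Fin.exists_coe_add_one_eq (n := h) (r := ybar v) (by omega) (by omega)
  refine ⟨(c, i), (c, j), Or.inl ⟨rfl, Or.inl (by dsimp only; omega)⟩, ?_,
    gridLabel_eq_of_mem hrep (Or.inl hx.2.1) hj⟩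
  rw [gridLabel, hi]
  exact colLabel_of_isVerticalSightline hrep huv hlt hx

theorem exists_gridAdj_of_isChannel (hX : IsColumnSet G ybar xl xr vis X)
    (hrep : IsFlatVisibilityRep G h ybar xl xr vis) {u v : V}
    (huv : IsChannel G ybar xl xr u v) : ∃ p q, (gridGraph X.card h).Adj p q ∧
      gridLabel G ybar xl xr X p = u ∧ gridLabel G ybar xl xr X q = v := by
  set e := X.orderEmbOfFin rfl
  obtain ⟨c, hc⟩ := Finset.exists_orderEmbOfFin_eq (hX.xr_mem u)
  obtain ⟨c', hc'⟩ := Finset.exists_orderEmbOfFin_eq (hX.xr_mem v)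
  have hcc' : c < c' := e.lt_iff_lt.mp <| by
    rw [hc, hc']
    exact_mod_cast huv.2.2.trans_le (hrep.xl_le_xr v)
  let d : Fin X.card := ⟨c + 1, by omega⟩
  have hd : e d ∈ Ioc (xr u : ℝ) (xr v) :=
    ⟨hc ▸ e.lt_iff_lt.mpr (Fin.lt_def.mpr (Nat.lt_succ_self c)),
      hc' ▸ e.le_iff_le.mpr (Fin.le_def.mpr hcc')⟩
  obtain ⟨i, hi⟩ := hrep.exists_row u
  exact ⟨(c, i), (d, i), Or.inr ⟨rfl, Or.inl rfl⟩,
    gridLabel_eq_of_mem hrep (hc ▸ xr_mem_extBar (hrep.xl_le_xr u)) hi,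
    gridLabel_eq_of_mem hrep (huv.Ioc_subset_extBar hd) (hi.trans huv.2.1)⟩

theorem isSimpleGridMajorRep (hX : IsColumnSet G ybar xl xr vis X)
    (hrep : IsFlatVisibilityRep G h ybar xl xr vis) :
    IsSimpleGridMajorRep G X.card h (gridLabel G ybar xl xr X) := by
  refine ⟨⟨Finset.card_pos.mpr ⟨_, hX.xr_mem (Classical.arbitrary V)⟩,
    fun v => ?_, hX.connected_induce_gridLabel hrep, fun u v huv => ?_⟩,
    fun c v _ _ _ h₁₂ h₂₃ h₁ h₃ =>
      (hX.ordConnected_gridLabel_column hrep c v).out h₁ h₃ ⟨h₁₂, h₂₃⟩⟩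
  · obtain ⟨⟨p, hp⟩⟩ := (hX.connected_induce_gridLabel hrep v).nonempty
    exact ⟨p, hp⟩
  wlog hle : ybar u ≤ ybar v generalizing u v
  · obtain ⟨p, q, hpq, hp, hq⟩ := this v u huv.symm (le_of_not_ge hle)
    exact ⟨q, p, hpq.symm, hq, hp⟩
  rcases hle.lt_or_eq with hlt | hrow
  · exact hX.exists_gridAdj_of_ybar_lt hrep huv hlt
  rcases isChannel_or_isChannel hrep huv hrow with hch | hch
  · exact hX.exists_gridAdj_of_isChannel hrep hch
  · obtain ⟨p, q, hpq, hp, hq⟩ := hX.exists_gridAdj_of_isChannel hrep hch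
    exact ⟨q, p, hpq.symm, hq, hp⟩

end IsColumnSet

end Grid

end FlatVisibility

/-- `sGMh(G) ≤ VRh(G)`: every flat visibility representation of a
triangulated planar graph of height `h` can be converted into a simple grid-major
representation of height `h`. -/
theorem simpleGridMajor_of_flatVisibility
    {V : Type*} [Fintype V] [DecidableEq V] (T : PlaneTriangulation V)
    (h : ℕ) (ybar xl xr : V → ℤ) (vis : V → V → Set (ℝ × ℝ))
    (hrep : IsFlatVisibilityRep T.graph h ybar xl xr vis) :
    ∃ (W : ℕ) (lab : Fin W × Fin h → V), IsSimpleGridMajorRep T.graph W h lab := by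
  have : Nonempty V := Fintype.card_pos_iff.mp (by have := T.three_le_card; omega)
  obtain ⟨X, hX⟩ := FlatVisibility.exists_isColumnSet hrep
  exact ⟨X.card, FlatVisibility.gridLabel T.graph ybar xl xr X, hX.isSimpleGridMajorRep hrep⟩
end
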